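/- arXiv:2207.04641 — 3 statements merged into one kernel-verified Lean document; each statement's English description precedes it below -/
import Mathlib

section
/- Let G be a finite group. Then the complement of the enhanced power graph of G is bipartite (i.e., 2-colorable) if and only if G is cyclic. -/
/-!
If `G` is cyclic, every pair of elements lies in one cyclic subgroup, so `coPE G` has no edges.
Otherwise no cyclic subgroup is all of `G`. Generators of two distinct maximal cyclic subgroups
are adjacent in `coPE G`, since a cyclic subgroup containing both would contain both subgroups.
No group is a union of two proper subgroups, so there are at least three maximal cyclic
subgroups, and their generators form a triangle, which cannot be coloured with two colours.
-/

/-- A subgroup `M` of `G` is a maximal cyclic subgroup if it is cyclic and is not properly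
contained in any cyclic subgroup of `G` other than itself. -/
def IsMaximalCyclic {G : Type*} [Group G] (M : Subgroup G) : Prop :=
  (∃ g : G, M = Subgroup.zpowers g) ∧
    ∀ K : Subgroup G, (∃ g : G, K = Subgroup.zpowers g) → M ≤ K → M = K

/-- The complement of the enhanced power graph of a group `G`: distinct `x, y` are adjacent
iff no cyclic subgroup of `G` contains both. -/
def coPE (G : Type*) [Group G] : SimpleGraph G where
  Adj x y := x ≠ y ∧ ¬∃ z : G, x ∈ Subgroup.zpowers z ∧ y ∈ Subgroup.zpowers z
  symm := by
    constructor
    rintro x y ⟨h1, h2⟩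
    exact ⟨h1.symm, fun ⟨z, hz⟩ => h2 ⟨z, hz.2, hz.1⟩⟩
  loopless := by constructor; rintro x ⟨h, -⟩; exact h rfl

open Subgroup SimpleGraph

section

variable {G : Type*} [Group G]

theorem coPE_eq_bot [IsCyclic G] : coPE G = ⊥ := by
  obtain ⟨g, hg⟩ := IsCyclic.exists_generator (α := G)
  ext x y
  exact ⟨fun h => h.2 ⟨g, hg x, hg y⟩, False.elim⟩

theorem exists_isMaximalCyclic_zpowers_mem [Finite G] (x : G) :
    ∃ g : G, IsMaximalCyclic (zpowers g) ∧ x ∈ zpowers g := by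
  obtain ⟨M, hxM, hmax⟩ := (Set.toFinite {K : Subgroup G | ∃ g, K = zpowers g}).exists_le_maximal
    (a := zpowers x) ⟨x, rfl⟩
  obtain ⟨g, rfl⟩ := hmax.prop
  exact ⟨g, ⟨⟨g, rfl⟩, fun K hK hle => le_antisymm hle (hmax.2 hK hle)⟩,
    hxM (mem_zpowers x)⟩

theorem zpowers_ne_top_of_not_isCyclic (hG : ¬IsCyclic G) (g : G) : zpowers g ≠ ⊤ :=
  fun h => hG (isCyclic_iff_exists_zpowers_eq_top.mpr ⟨g, h⟩)

theorem exists_notMem_notMem_of_ne_top {H K : Subgroup G} (hH : H ≠ ⊤) (hK : K ≠ ⊤) :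
    ∃ y, y ∉ H ∧ y ∉ K := by
  by_contra! hcover
  obtain h | h := (SubgroupClass.subset_union (H := (⊤ : Subgroup G))).mp
    fun y _ => or_iff_not_imp_left.mpr (hcover y)
  exacts [hH (top_le_iff.mp h), hK (top_le_iff.mp h)]

theorem coPE_adj_of_isMaximalCyclic {g h : G} (hg : IsMaximalCyclic (zpowers g))
    (hh : IsMaximalCyclic (zpowers h)) (hne : zpowers g ≠ zpowers h) : (coPE G).Adj g h := by
  refine ⟨fun he => hne (by rw [he]), ?_⟩
  rintro ⟨z, hgz, hhz⟩
  exact hne ((hg.2 _ ⟨z, rfl⟩ (zpowers_le.mpr hgz)).trans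
    (hh.2 _ ⟨z, rfl⟩ (zpowers_le.mpr hhz)).symm)

theorem not_cliqueFree_three_coPE [Finite G] (hG : ¬IsCyclic G) : ¬(coPE G).CliqueFree 3 := by
  classical
  obtain ⟨g₁, hg₁, -⟩ := exists_isMaximalCyclic_zpowers_mem (1 : G)
  obtain ⟨x, -, hx₁⟩ := SetLike.exists_of_lt (zpowers_ne_top_of_not_isCyclic hG g₁).lt_top
  obtain ⟨g₂, hg₂, hx₂⟩ := exists_isMaximalCyclic_zpowers_mem x
  obtain ⟨y, hy₁, hy₂⟩ := exists_notMem_notMem_of_ne_top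
    (zpowers_ne_top_of_not_isCyclic hG g₁) (zpowers_ne_top_of_not_isCyclic hG g₂)
  obtain ⟨g₃, hg₃, hy₃⟩ := exists_isMaximalCyclic_zpowers_mem y
  refine ((is3Clique_triple_iff (a := g₁) (b := g₂) (c := g₃)).mpr ⟨?_, ?_, ?_⟩).not_cliqueFree
  · exact coPE_adj_of_isMaximalCyclic hg₁ hg₂ fun h => hx₁ (h ▸ hx₂)
  · exact coPE_adj_of_isMaximalCyclic hg₁ hg₃ fun h => hy₁ (h ▸ hy₃)
  · exact coPE_adj_of_isMaximalCyclic hg₂ hg₃ fun h => hy₂ (h ▸ hy₃)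

end

theorem coPE_bipartite_iff_cyclic {G : Type*} [Group G] [Finite G] :
    (coPE G).Colorable 2 ↔ IsCyclic G := by
  refine ⟨fun hcol => ?_, fun _ => (colorable_one_iff.mpr coPE_eq_bot).mono one_le_two⟩
  by_contra hG
  exact not_cliqueFree_three_coPE hG (hcol.cliqueFree (by norm_num))
end

section
/- Let G be a finite group. Then the clique number of the complement of the enhanced power graph of G equals the number of maximal cyclic subgroups of G. -/
/-!
Every element lies in some maximal cyclic subgroup, and two distinct elements of a clique of
`coPE G` cannot share one, so a clique is no larger than the set of maximal cyclic subgroups.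
Conversely, generators of distinct maximal cyclic subgroups `⟨x⟩ ≠ ⟨y⟩` are adjacent: if both lay
in some `⟨z⟩`, maximality would force `⟨x⟩ = ⟨z⟩ = ⟨y⟩`. Choosing one generator of each maximal
cyclic subgroup therefore gives a clique of the required size.
-/

open Finset

section

variable {G : Type*} [Group G]

theorem IsMaximalCyclic.eq_zpowers_of_le {M : Subgroup G} (hM : IsMaximalCyclic M) {z : G}
    (h : M ≤ Subgroup.zpowers z) : M = Subgroup.zpowers z :=
  hM.2 _ ⟨z, rfl⟩ h

theorem exists_isMaximalCyclic_mem [Finite G] (x : G) :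
    ∃ M : Subgroup G, IsMaximalCyclic M ∧ x ∈ M := by
  have hfin : {K : Subgroup G | (∃ g, K = Subgroup.zpowers g) ∧
      Subgroup.zpowers x ≤ K}.Finite := Set.toFinite _
  obtain ⟨M, ⟨hMcyc, hxM⟩, hmax⟩ :=
    hfin.exists_maximalFor id _ ⟨Subgroup.zpowers x, ⟨x, rfl⟩, le_rfl⟩
  refine ⟨M, ⟨hMcyc, fun K hKcyc hMK => ?_⟩, hxM (Subgroup.mem_zpowers x)⟩
  exact le_antisymm hMK (hmax (j := K) ⟨hKcyc, hxM.trans hMK⟩ hMK)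

theorem IsMaximalCyclic.coPE_adj {M N : Subgroup G} (hM : IsMaximalCyclic M)
    (hN : IsMaximalCyclic N) (hMN : M ≠ N) {x y : G} (hx : M = Subgroup.zpowers x)
    (hy : N = Subgroup.zpowers y) : (coPE G).Adj x y := by
  refine ⟨fun hxy => hMN (by rw [hx, hy, hxy]), ?_⟩
  rintro ⟨z, hxz, hyz⟩
  have hMz := hM.eq_zpowers_of_le (hx ▸ Subgroup.zpowers_le.mpr hxz)
  have hNz := hN.eq_zpowers_of_le (hy ▸ Subgroup.zpowers_le.mpr hyz)
  exact hMN (hMz.trans hNz.symm)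

theorem card_le_of_isClique_coPE [Finite G] {s : Finset G} (hs : (coPE G).IsClique s) :
    #s ≤ Nat.card {M : Subgroup G // IsMaximalCyclic M} := by
  choose f hf hmem using fun x : s => exists_isMaximalCyclic_mem (x : G)
  have hinj : Function.Injective fun x : s => (⟨f x, hf x⟩ : {M // IsMaximalCyclic M}) := by
    intro x y hxy
    by_contra hne
    obtain ⟨g, hg⟩ := (hf x).1
    have hfxy : f x = f y := congrArg Subtype.val hxy
    exact (hs x.2 y.2 (Subtype.coe_ne_coe.mpr hne)).2
      ⟨g, hg ▸ hmem x, hg ▸ hfxy ▸ hmem y⟩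
  simpa only [Nat.card_eq_finsetCard] using Nat.card_le_card_of_injective _ hinj

theorem card_isMaximalCyclic_le_cliqueNum_coPE [Finite G] :
    Nat.card {M : Subgroup G // IsMaximalCyclic M} ≤ (coPE G).cliqueNum := by
  classical
  have := Fintype.ofFinite G
  choose gen hgen using fun M : {M : Subgroup G // IsMaximalCyclic M} => M.2.1
  have hinj : Function.Injective gen := fun M N h => Subtype.ext (by rw [hgen M, hgen N, h])
  have hclique : (coPE G).IsClique (univ.image gen : Set G) := by
    simp only [coe_image, coe_univ, Set.image_univ]
    rintro _ ⟨M, rfl⟩ _ ⟨N, rfl⟩ hne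
    exact M.2.coPE_adj N.2 (fun h => hne (congrArg gen (Subtype.ext h))) (hgen M) (hgen N)
  calc Nat.card {M : Subgroup G // IsMaximalCyclic M}
      = #(univ.image gen) := by
        rw [card_image_of_injective _ hinj, card_univ, Nat.card_eq_fintype_card]
    _ ≤ (coPE G).cliqueNum := hclique.card_le_cliqueNum

end

theorem coPE_cliqueNum {G : Type*} [Group G] [Finite G] :
    (coPE G).cliqueNum = Nat.card {M : Subgroup G // IsMaximalCyclic M} := by
  obtain ⟨s, hs⟩ := (coPE G).exists_isNClique_cliqueNum
  exact le_antisymm (hs.card_eq ▸ card_le_of_isClique_coPE hs.isClique)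
    card_isMaximalCyclic_le_cliqueNum_coPE
end

section
/- Let n ≥ 2 and let Q_{4n} be the dicyclic (generalized quaternion) group of order 4n. Then the graph co-P_E(Q_{4n}*) is Eulerian (connected with a closed trail traversing every edge exactly once). -/
/-- The set of non-isolated vertices of `coPE G`. -/
def nonIsolated (G : Type*) [Group G] : Set G := {x | ∃ y, (coPE G).Adj x y}

/-- The subgraph of `coPE G` induced by its non-isolated vertices. -/
def coPEstar (G : Type*) [Group G] : SimpleGraph (nonIsolated G) :=
  (coPE G).induce (nonIsolated G)

open scoped Classical in
/-- A graph is Eulerian if it is connected and admits a closed trail traversing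
every edge exactly once. -/
def IsEulerianGraph {V : Type*} (Γ : SimpleGraph V) : Prop :=
  Γ.Connected ∧ ∃ (v : V) (p : Γ.Walk v v), p.IsEulerian

/-!
In `Q₄ₙ` all powers of `a` lie in the cyclic subgroup `⟨a 1⟩`, and `xa j` generates
`{1, a n, xa j, xa (n + j)}`. Hence `1` and `a n` share a cyclic subgroup with every element and are
isolated, while every other `a i` is adjacent to every `xa j`; as `n ≥ 2`, this puts every vertex
within distance two of `a 1`, so the graph is connected. Inversion maps the neighbourhood of each
vertex onto itself, and its only fixed points `1` and `a n` are isolated, so all degrees are even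
and Euler's theorem applies.
-/

namespace SimpleGraph

variable {V : Type*} {G : SimpleGraph V}

theorem Walk.exists_mem_support_adj_notMem_edges {u v : V} (p : G.Walk u v) :
    ∀ {x t : V}, G.Walk x t → t ∈ p.support → (∃ y, G.Adj x y ∧ s(x, y) ∉ p.edges) →
      ∃ z ∈ p.support, ∃ w, G.Adj z w ∧ s(z, w) ∉ p.edges
  | x, _, .nil, ht, hx => ⟨x, ht, hx⟩
  | x, _, .cons hxy q, ht, hx => by
    by_cases hxp : x ∈ p.support
    · exact ⟨x, hxp, hx⟩
    · refine p.exists_mem_support_adj_notMem_edges q ht ⟨x, hxy.symm, fun hmem => hxp ?_⟩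
      exact p.snd_mem_support_of_mem_edges hmem

theorem Walk.IsTrail.exists_adj_notMem_edges [Fintype V] [DecidableEq V] [DecidableRel G.Adj]
    {u v : V} {p : G.Walk u v} (hp : p.IsTrail) (huv : u ≠ v) (hv : Even (G.degree v)) :
    ∃ w, G.Adj v w ∧ s(v, w) ∉ p.edges := by
  by_contra! hall
  have hodd : ¬ Even (p.edges.countP (v ∈ ·)) := by
    simp [hp.even_countP_edges_iff v, huv]
  have hincident : (p.edges.filter (v ∈ ·)).toFinset = G.incidenceFinset v := by
    ext e
    simp only [List.mem_toFinset, List.mem_filter, decide_eq_true_eq, mem_incidenceFinset,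
      incidenceSet, Set.mem_ofPred_eq]
    refine ⟨fun he => ⟨p.edges_subset_edgeSet he.1, he.2⟩, fun he => ⟨?_, he.2⟩⟩
    obtain ⟨w, rfl⟩ := Sym2.mem_iff_exists.mp he.2
    exact hall w he.1
  rw [List.countP_eq_length_filter, ← List.toFinset_card_of_nodup (hp.edges_nodup.filter _),
    hincident, card_incidenceFinset_eq_degree] at hodd
  exact hodd hv

theorem exists_isTrail_forall_length_le [Fintype G.edgeSet] [Nonempty V] :
    ∃ (u v : V) (p : G.Walk u v), p.IsTrail ∧
      ∀ (x y : V) (q : G.Walk x y), q.IsTrail → q.length ≤ p.length := by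
  set S : Set ℕ := {k | ∃ (x y : V) (q : G.Walk x y), q.IsTrail ∧ q.length = k}
  have hbdd : BddAbove S := by
    refine ⟨G.edgeFinset.card, ?_⟩
    rintro _ ⟨_, _, q, hq, rfl⟩
    exact hq.length_le_card_edgeFinset
  have hnil : 0 ∈ S := ⟨Classical.arbitrary V, _, .nil, .nil, rfl⟩
  obtain ⟨u, v, p, hp, hlen⟩ := Nat.sSup_mem ⟨0, hnil⟩ hbdd
  exact ⟨u, v, p, hp, fun x y q hq => hlen ▸ le_csSup hbdd ⟨x, y, q, hq, rfl⟩⟩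

/-- Euler's theorem: a longest trail in a connected graph with even degrees is closed (an unused
edge at its end would extend it) and uses every edge (otherwise rotate it to a vertex with an unused
edge and extend it there). -/
theorem Connected.exists_isEulerian [Fintype V] [DecidableEq V] [DecidableRel G.Adj]
    (hconn : G.Connected) (heven : ∀ v, Even (G.degree v)) :
    ∃ (v : V) (p : G.Walk v v), p.IsEulerian := by
  have := hconn.nonempty
  obtain ⟨u, v, p, hp, hmax⟩ := G.exists_isTrail_forall_length_le
  obtain rfl : u = v := by
    by_contra huv
    obtain ⟨w, hvw, hw⟩ := hp.exists_adj_notMem_edges huv (heven v)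
    have hext : (Walk.cons hvw.symm p.reverse).IsTrail := by
      rw [Walk.isTrail_cons, Walk.edges_reverse, List.mem_reverse, Sym2.eq_swap]
      exact ⟨hp.reverse, hw⟩
    simpa using hmax _ _ _ hext
  refine ⟨u, p, hp.isEulerian_of_forall_mem fun e he => ?_⟩
  by_contra hmiss
  induction e using Sym2.ind with
  | _ x y =>
    obtain ⟨z, hz, w, hzw, hw⟩ :=
      p.exists_mem_support_adj_notMem_edges (hconn x u).some p.start_mem_support ⟨y, he, hmiss⟩
    have hext : (Walk.cons hzw.symm (p.rotate z hz)).IsTrail := by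
      rw [Walk.isTrail_cons, (p.rotate_edges z hz).mem_iff, Sym2.eq_swap]
      exact ⟨hp.rotate hz, hw⟩
    simpa using hmax _ _ _ hext

theorem even_degree_of_involutive {v : V} [Fintype (G.neighborSet v)] {f : V → V}
    (hf : Function.Involutive f) (hadj : ∀ x, G.Adj v x → G.Adj v (f x))
    (hfix : ∀ x, G.Adj v x → f x ≠ x) : Even (G.degree v) := by
  classical
  let g : Function.End (G.neighborSet v) := fun x => ⟨f x, hadj x x.2⟩
  have hg : g ^ 2 ^ 1 = 1 := funext fun x => Subtype.ext (hf x)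
  have hmod := Equiv.Perm.card_fixedPoints_modEq (p := 2) hg
  have : IsEmpty (Function.fixedPoints g) := ⟨fun x => hfix x.1 x.1.2 (congrArg Subtype.val x.2)⟩
  rw [card_neighborSet_eq_degree, Fintype.card_eq_zero] at hmod
  exact Nat.even_iff.mpr hmod

end SimpleGraph

section coPE

variable {G : Type*} [Group G]

theorem coPEstar_adj {x y : nonIsolated G} : (coPEstar G).Adj x y ↔ (coPE G).Adj x y := Iff.rfl

theorem coPE_adj_inv_left {x y : G} (h : (coPE G).Adj x y) : (coPE G).Adj x⁻¹ y := by
  refine ⟨fun hxy => h.2 ⟨x, Subgroup.mem_zpowers x, hxy ▸ inv_mem (Subgroup.mem_zpowers x)⟩, ?_⟩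
  rintro ⟨z, hx, hy⟩
  exact h.2 ⟨z, inv_inv x ▸ inv_mem hx, hy⟩

theorem inv_mem_nonIsolated {x : G} (hx : x ∈ nonIsolated G) : x⁻¹ ∈ nonIsolated G :=
  let ⟨y, hxy⟩ := hx
  ⟨y, coPE_adj_inv_left hxy⟩

theorem coPEstar_even_degree [Fintype (nonIsolated G)] [DecidableRel (coPEstar G).Adj]
    (hinv : ∀ x : G, x⁻¹ = x → x ∉ nonIsolated G) (v : nonIsolated G) :
    Even ((coPEstar G).degree v) :=
  SimpleGraph.even_degree_of_involutive (f := fun x => ⟨x.1⁻¹, inv_mem_nonIsolated x.2⟩)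
    (fun x => Subtype.ext (inv_inv x.1))
    (fun _ hx => (coPE_adj_inv_left hx.symm).symm)
    (fun x _ hx => hinv x (congrArg Subtype.val hx) x.2)

end coPE

theorem isEulerianGraph_of_connected_of_even_degree {V : Type*} [Fintype V] {Γ : SimpleGraph V}
    [DecidableRel Γ.Adj] (hconn : Γ.Connected) (heven : ∀ v, Even (Γ.degree v)) :
    IsEulerianGraph Γ := by
  classical
  exact ⟨hconn, hconn.exists_isEulerian heven⟩

namespace QuaternionGroup

variable {n : ℕ}

theorem a_mem_zpowers_a_one [NeZero n] (i : ZMod (2 * n)) :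
    a i ∈ Subgroup.zpowers (a 1 : QuaternionGroup n) :=
  Subgroup.mem_zpowers_iff.mpr ⟨i.val, by rw [zpow_natCast, a_one_pow, ZMod.natCast_zmod_val]⟩

theorem xa_notMem_zpowers_a [NeZero n] (i j : ZMod (2 * n)) :
    xa j ∉ Subgroup.zpowers (a i : QuaternionGroup n) := by
  intro h
  obtain ⟨k, hk : a 1 ^ k = xa j⟩ := mem_powers_iff_mem_zpowers.mpr <|
    Subgroup.zpowers_le.mpr (a_mem_zpowers_a_one i) h
  rw [a_one_pow] at hk
  exact nomatch hk

theorem a_mem_zpowers_xa_iff [NeZero n] {i j : ZMod (2 * n)} :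
    a i ∈ Subgroup.zpowers (xa j : QuaternionGroup n) ↔ i = 0 ∨ i = n := by
  classical
  constructor
  · rw [mem_zpowers_iff_mem_range_orderOf, orderOf_xa]
    simp only [Finset.mem_image, Finset.mem_range]
    rintro ⟨k, hk, hki⟩
    interval_cases k
    · rw [pow_zero, one_def, a.injEq] at hki
      exact .inl hki.symm
    all_goals simp_all [pow_succ, eq_comm]
  · rintro (rfl | rfl)
    · exact one_def (n := n) ▸ Subgroup.one_mem _
    · exact xa_sq j ▸ Subgroup.pow_mem _ (Subgroup.mem_zpowers _) 2

theorem coPE_adj_a_xa [NeZero n] {i : ZMod (2 * n)} (hi₀ : i ≠ 0) (hin : i ≠ n)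
    (j : ZMod (2 * n)) : (coPE (QuaternionGroup n)).Adj (a i) (xa j) := by
  refine ⟨fun h => (nomatch h), ?_⟩
  rintro ⟨z | z, hi, hj⟩
  · exact xa_notMem_zpowers_a z j hj
  · rcases a_mem_zpowers_xa_iff.mp hi with h | h
    exacts [hi₀ h, hin h]

theorem coPE_adj_a_one_xa (hn : 2 ≤ n) (j : ZMod (2 * n)) :
    (coPE (QuaternionGroup n)).Adj (a 1) (xa j) := by
  have : NeZero n := ⟨by omega⟩
  refine coPE_adj_a_xa ?_ ?_ j
  · have : Fact (1 < 2 * n) := ⟨by omega⟩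
    exact one_ne_zero
  · rw [← Nat.cast_one, Ne, ZMod.natCast_eq_natCast_iff', Nat.mod_eq_of_lt (by omega),
      Nat.mod_eq_of_lt (by omega)]
    omega

theorem mem_nonIsolated_a_iff [NeZero n] {i : ZMod (2 * n)} :
    a i ∈ nonIsolated (QuaternionGroup n) ↔ i ≠ 0 ∧ i ≠ n := by
  refine ⟨?_, fun ⟨hi₀, hin⟩ => ⟨xa 0, coPE_adj_a_xa hi₀ hin 0⟩⟩
  rintro ⟨y | y, hy⟩
  · exact absurd ⟨a 1, a_mem_zpowers_a_one i, a_mem_zpowers_a_one y⟩ hy.2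
  · by_contra! h
    exact hy.2 ⟨xa y, a_mem_zpowers_xa_iff.mpr (or_iff_not_imp_left.mpr h), Subgroup.mem_zpowers _⟩

theorem xa_mem_nonIsolated (hn : 2 ≤ n) (j : ZMod (2 * n)) :
    xa j ∈ nonIsolated (QuaternionGroup n) :=
  ⟨a 1, (coPE_adj_a_one_xa hn j).symm⟩

theorem a_one_mem_nonIsolated (hn : 2 ≤ n) : a 1 ∈ nonIsolated (QuaternionGroup n) :=
  ⟨xa 0, coPE_adj_a_one_xa hn 0⟩

theorem notMem_nonIsolated_of_inv_eq_self [NeZero n] {x : QuaternionGroup n} (hx : x⁻¹ = x) :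
    x ∉ nonIsolated (QuaternionGroup n) := by
  cases x with
  | a i =>
    have hi : -i = i := a.inj hx
    rw [mem_nonIsolated_a_iff, not_and_or, not_not, not_not]
    refine (ZMod.neg_eq_self_iff i).mp hi |>.imp_right fun h => ?_
    rw [← ZMod.natCast_zmod_val i]
    congr 1
    omega
  | xa j =>
    have hj : (n : ZMod (2 * n)) + j = j := xa.inj hx
    rw [add_eq_right, ZMod.natCast_eq_zero_iff] at hj
    have hn := Nat.pos_of_neZero n
    have := Nat.le_of_dvd hn hj
    omega

theorem coPEstar_connected (hn : 2 ≤ n) : (coPEstar (QuaternionGroup n)).Connected := by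
  have : NeZero n := ⟨by omega⟩
  let c : nonIsolated (QuaternionGroup n) := ⟨a 1, a_one_mem_nonIsolated hn⟩
  have hxa (j) : (coPEstar (QuaternionGroup n)).Adj ⟨xa j, xa_mem_nonIsolated hn j⟩ c :=
    coPEstar_adj.mpr (coPE_adj_a_one_xa hn j).symm
  have hc : ∀ v, (coPEstar (QuaternionGroup n)).Reachable v c := by
    rintro ⟨_ | j, hv⟩
    · obtain ⟨hi₀, hin⟩ := mem_nonIsolated_a_iff.mp hv
      exact (coPEstar_adj.mpr (coPE_adj_a_xa hi₀ hin 0)).reachable.trans (hxa 0).reachable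
    · exact (hxa j).reachable
  have : Nonempty (nonIsolated (QuaternionGroup n)) := ⟨c⟩
  exact ⟨fun u v => (hc u).trans (hc v).symm⟩

end QuaternionGroup

theorem coPEstar_dicyclic_eulerian (n : ℕ) (hn : 2 ≤ n) :
    IsEulerianGraph (coPEstar (QuaternionGroup n)) := by
  classical
  have : NeZero n := ⟨by omega⟩
  have : Fintype (nonIsolated (QuaternionGroup n)) := Fintype.ofFinite _
  exact isEulerianGraph_of_connected_of_even_degree (QuaternionGroup.coPEstar_connected hn)
    (coPEstar_even_degree fun _ => QuaternionGroup.notMem_nonIsolated_of_inv_eq_self)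
end
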